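/- Let H₁, H₂ be Hilbert spaces and u : H₁ → H₂ a bounded linear operator. If u is 2-summing, then u is Hilbert-Schmidt, and conversely every Hilbert-Schmidt operator u : H₁ → H₂ is 2-summing with π₂(u) equal to the Hilbert-Schmidt norm of u. -/

import Mathlib

open scoped BigOperators

/-- The set of admissible `p`-summing constants of `u`: nonnegative `c` such that
`∑ ‖u xₙ‖ᵖ ≤ cᵖ · sup_{‖x*‖≤1} ∑ |⟨xₙ, x*⟩|ᵖ` for all finite families. -/
def summingSet (p : ℝ) {E F : Type*} [NormedAddCommGroup E] [NormedSpace ℝ E]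
    [NormedAddCommGroup F] [NormedSpace ℝ F] (u : E →L[ℝ] F) : Set ℝ :=
  {c | 0 ≤ c ∧ ∀ (N : ℕ) (x : Fin N → E),
    ∑ n : Fin N, ‖u (x n)‖ ^ p ≤
      c ^ p * ⨆ g : {g : StrongDual ℝ E // ‖g‖ ≤ 1}, ∑ n : Fin N, |g.1 (x n)| ^ p}

/-- `u` is `p`-summing. -/
def IsPSumming (p : ℝ) {E F : Type*} [NormedAddCommGroup E] [NormedSpace ℝ E]
    [NormedAddCommGroup F] [NormedSpace ℝ F] (u : E →L[ℝ] F) : Prop :=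
  (summingSet p u).Nonempty

/-- The `p`-summing norm `π_p(u)` (the least admissible constant). -/
noncomputable def piNorm (p : ℝ) {E F : Type*} [NormedAddCommGroup E] [NormedSpace ℝ E]
    [NormedAddCommGroup F] [NormedSpace ℝ F] (u : E →L[ℝ] F) : ℝ :=
  sInf (summingSet p u)

/-!
In a Hilbert space the weak `ℓ²` quantity `sup_{‖g‖ ≤ 1} ∑ₙ |g xₙ|²` equals
`sup_{‖y‖ ≤ 1} ∑ₙ ⟪y, xₙ⟫²`, which is at most `1` on an orthonormal family by Bessel's inequality.
Hence a `2`-summing constant `c` bounds every finite partial sum of `∑ᵢ ‖u eᵢ‖²` by `c²`.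
Conversely, expanding `u xₙ` in a Hilbert basis `(f_j)` of `H₂`,
`∑ₙ ‖u xₙ‖² = ∑_j ∑ₙ ⟪u* f_j, xₙ⟫² ≤ (∑_j ‖u* f_j‖²) · sup_{‖y‖ ≤ 1} ∑ₙ ⟪y, xₙ⟫²`,
and Parseval's identity in both spaces shows `∑_j ‖u* f_j‖² = ∑ᵢ ‖u eᵢ‖²`.
-/

open scoped RealInnerProductSpace

/-- The `p`-th power of the weak `ℓᵖ` norm of a finite family. -/
noncomputable def weakPSum (p : ℝ) {E ι : Type*} [NormedAddCommGroup E] [NormedSpace ℝ E]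
    [Fintype ι] (x : ι → E) : ℝ :=
  ⨆ g : {g : StrongDual ℝ E // ‖g‖ ≤ 1}, ∑ n, |g.1 (x n)| ^ p

section WeakPSum

variable {E F ι : Type*} [NormedAddCommGroup E] [NormedSpace ℝ E] [Fintype ι]

instance : Nonempty {g : StrongDual ℝ E // ‖g‖ ≤ 1} := ⟨⟨0, by simp⟩⟩

theorem bddAbove_range_sum_rpow_abs {p : ℝ} (hp : 0 ≤ p) (x : ι → E) :
    BddAbove (Set.range fun g : {g : StrongDual ℝ E // ‖g‖ ≤ 1} => ∑ n, |g.1 (x n)| ^ p) := by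
  refine ⟨∑ n, ‖x n‖ ^ p, ?_⟩
  rintro _ ⟨g, rfl⟩
  refine Finset.sum_le_sum fun n _ => Real.rpow_le_rpow (abs_nonneg _) ?_ hp
  calc |g.1 (x n)| ≤ ‖g.1‖ * ‖x n‖ := g.1.le_opNorm _
    _ ≤ ‖x n‖ := mul_le_of_le_one_left (norm_nonneg _) g.2

theorem sum_rpow_abs_le_weakPSum {p : ℝ} (hp : 0 ≤ p) (x : ι → E) {g : StrongDual ℝ E}
    (hg : ‖g‖ ≤ 1) : ∑ n, |g (x n)| ^ p ≤ weakPSum p x :=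
  le_ciSup (bddAbove_range_sum_rpow_abs hp x) ⟨g, hg⟩

theorem sum_norm_rpow_le_of_mem_summingSet [NormedAddCommGroup F] [NormedSpace ℝ F]
    {p c : ℝ} {u : E →L[ℝ] F} (hc : c ∈ summingSet p u) (x : ι → E) :
    ∑ n, ‖u (x n)‖ ^ p ≤ c ^ p * weakPSum p x := by
  let σ := Fintype.equivFin ι
  have h := hc.2 (Fintype.card ι) (x ∘ σ.symm)
  have hsup : (fun g : {g : StrongDual ℝ E // ‖g‖ ≤ 1} => ∑ n, |g.1 (x (σ.symm n))| ^ p) =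
      fun g => ∑ n, |g.1 (x n)| ^ p :=
    funext fun g => Equiv.sum_comp σ.symm fun n => |g.1 (x n)| ^ p
  simp only [Function.comp_apply, Equiv.sum_comp σ.symm fun n => ‖u (x n)‖ ^ p, hsup] at h
  exact h

end WeakPSum

section InnerProductSpace

variable {E ι : Type*} [NormedAddCommGroup E] [InnerProductSpace ℝ E] [CompleteSpace E]
  [Fintype ι]

theorem sum_inner_sq_le_mul_weakPSum (x : ι → E) (y : E) :
    ∑ n, ⟪y, x n⟫ ^ 2 ≤ ‖y‖ ^ 2 * weakPSum 2 x := by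
  rcases eq_or_ne y 0 with rfl | hy
  · simp
  have hy' : 0 < ‖y‖ := norm_pos_iff.mpr hy
  let g := ‖y‖⁻¹ • InnerProductSpace.toDual ℝ E y
  have hg : ‖g‖ ≤ 1 := by
    rw [norm_smul, LinearIsometryEquiv.norm_map, norm_inv, norm_norm, inv_mul_cancel₀ hy'.ne']
  have hgx : ∀ n, |g (x n)| ^ (2 : ℝ) = ‖y‖⁻¹ ^ 2 * ⟪y, x n⟫ ^ 2 := fun n => by
    simp [g, mul_pow]
  have h := sum_rpow_abs_le_weakPSum zero_le_two x hg
  simp only [hgx, ← Finset.mul_sum] at h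
  rwa [inv_pow, inv_mul_le_iff₀ (pow_pos hy' 2)] at h

theorem Orthonormal.weakPSum_two_le_one {v : ι → E} (hv : Orthonormal ℝ v) :
    weakPSum 2 v ≤ 1 := by
  refine ciSup_le fun g => ?_
  let y := (InnerProductSpace.toDual ℝ E).symm g.1
  have hy : ‖y‖ ≤ 1 := by rw [LinearIsometryEquiv.norm_map]; exact g.2
  calc ∑ n, |g.1 (v n)| ^ (2 : ℝ) = ∑ n, ‖⟪v n, y⟫‖ ^ 2 := by
        refine Finset.sum_congr rfl fun n _ => ?_
        rw [Real.rpow_two, Real.norm_eq_abs, real_inner_comm,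
          ← InnerProductSpace.toDual_apply_apply, LinearIsometryEquiv.apply_symm_apply]
    _ ≤ ‖y‖ ^ 2 := hv.sum_inner_products_le y
    _ ≤ 1 := pow_le_one₀ (norm_nonneg y) hy

end InnerProductSpace

theorem Orthonormal.sum_norm_sq_le_of_mem_summingSet {E F ι : Type*} [NormedAddCommGroup E]
    [InnerProductSpace ℝ E] [CompleteSpace E] [NormedAddCommGroup F] [NormedSpace ℝ F]
    {u : E →L[ℝ] F} {v : ι → E} (hv : Orthonormal ℝ v) {c : ℝ} (hc : c ∈ summingSet 2 u)
    (t : Finset ι) :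
    ∑ i ∈ t, ‖u (v i)‖ ^ 2 ≤ c ^ 2 := by
  have h := sum_norm_rpow_le_of_mem_summingSet (ι := t) hc fun i => v i
  have hw := (hv.comp ((↑) : t → ι) Subtype.val_injective).weakPSum_two_le_one
  simp only [Real.rpow_two, Finset.sum_coe_sort t fun i => ‖u (v i)‖ ^ 2] at h
  exact h.trans (mul_le_of_le_one_right (sq_nonneg c) hw)

theorem HilbertBasis.tsum_ofReal_inner_sq {E ι : Type*} [NormedAddCommGroup E]
    [InnerProductSpace ℝ E] (b : HilbertBasis ι ℝ E) (v : E) :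
    ∑' i, ENNReal.ofReal (⟪b i, v⟫ ^ 2) = ENNReal.ofReal (‖v‖ ^ 2) := by
  have h : HasSum (fun i => ⟪b i, v⟫ ^ 2) (‖v‖ ^ 2) := by
    simpa only [real_inner_comm (b _) v, ← sq, real_inner_self_eq_norm_sq]
      using b.hasSum_inner_mul_inner v v
  rw [← ENNReal.ofReal_tsum_of_nonneg (fun _ => sq_nonneg _) h.summable, h.tsum_eq]

section HilbertSchmidt

variable {H₁ H₂ ι κ : Type*} [NormedAddCommGroup H₁] [InnerProductSpace ℝ H₁] [CompleteSpace H₁]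
  [NormedAddCommGroup H₂] [InnerProductSpace ℝ H₂] [CompleteSpace H₂]

-- In `ℝ≥0∞` the order of summation can be exchanged without any summability hypothesis.
theorem tsum_ofReal_norm_adjoint_sq (u : H₁ →L[ℝ] H₂) (e : HilbertBasis ι ℝ H₁)
    (f : HilbertBasis κ ℝ H₂) :
    ∑' j, ENNReal.ofReal (‖ContinuousLinearMap.adjoint u (f j)‖ ^ 2) =
      ∑' i, ENNReal.ofReal (‖u (e i)‖ ^ 2) := by
  calc ∑' j, ENNReal.ofReal (‖ContinuousLinearMap.adjoint u (f j)‖ ^ 2)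
      = ∑' j, ∑' i, ENNReal.ofReal (⟪f j, u (e i)⟫ ^ 2) := by
        refine tsum_congr fun j => ?_
        rw [← e.tsum_ofReal_inner_sq]
        simp only [ContinuousLinearMap.adjoint_inner_right, real_inner_comm (f j)]
    _ = ∑' i, ∑' j, ENNReal.ofReal (⟪f j, u (e i)⟫ ^ 2) := ENNReal.tsum_comm
    _ = ∑' i, ENNReal.ofReal (‖u (e i)‖ ^ 2) := tsum_congr fun i => f.tsum_ofReal_inner_sq _

theorem sum_ofReal_norm_sq_le_tsum_mul_weakPSum [Fintype κ] (u : H₁ →L[ℝ] H₂)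
    (e : HilbertBasis ι ℝ H₁) (x : κ → H₁) :
    ∑ n, ENNReal.ofReal (‖u (x n)‖ ^ 2) ≤
      (∑' i, ENNReal.ofReal (‖u (e i)‖ ^ 2)) * ENNReal.ofReal (weakPSum 2 x) := by
  obtain ⟨w, f, -⟩ := exists_hilbertBasis ℝ H₂
  have hcol : ∀ j : w, ∑ n, ENNReal.ofReal (⟪f j, u (x n)⟫ ^ 2) ≤
      ENNReal.ofReal (‖ContinuousLinearMap.adjoint u (f j)‖ ^ 2) *
        ENNReal.ofReal (weakPSum 2 x) := by
    intro j
    simp only [← ContinuousLinearMap.adjoint_inner_left]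
    rw [← ENNReal.ofReal_sum_of_nonneg fun _ _ => sq_nonneg _, ← ENNReal.ofReal_mul (sq_nonneg _)]
    exact ENNReal.ofReal_le_ofReal (sum_inner_sq_le_mul_weakPSum x _)
  calc ∑ n, ENNReal.ofReal (‖u (x n)‖ ^ 2)
      = ∑' j, ∑ n, ENNReal.ofReal (⟪f j, u (x n)⟫ ^ 2) := by
        rw [Summable.tsum_finsetSum fun _ _ => ENNReal.summable]
        exact Finset.sum_congr rfl fun n _ => (f.tsum_ofReal_inner_sq _).symm
    _ ≤ ∑' j, ENNReal.ofReal (‖ContinuousLinearMap.adjoint u (f j)‖ ^ 2) *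
          ENNReal.ofReal (weakPSum 2 x) := ENNReal.tsum_le_tsum hcol
    _ = _ := by rw [ENNReal.tsum_mul_right, tsum_ofReal_norm_adjoint_sq u e f]

theorem sqrt_tsum_norm_sq_mem_summingSet (u : H₁ →L[ℝ] H₂) (e : HilbertBasis ι ℝ H₁)
    (hu : Summable fun i => ‖u (e i)‖ ^ 2) : √(∑' i, ‖u (e i)‖ ^ 2) ∈ summingSet 2 u := by
  refine ⟨Real.sqrt_nonneg _, fun N x => ?_⟩
  change _ ≤ _ * weakPSum 2 x
  have hT : 0 ≤ ∑' i, ‖u (e i)‖ ^ 2 := tsum_nonneg fun _ => sq_nonneg _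
  have hx : 0 ≤ weakPSum 2 x :=
    Real.iSup_nonneg fun _ => Finset.sum_nonneg fun _ _ => Real.rpow_nonneg (abs_nonneg _) _
  have h := sum_ofReal_norm_sq_le_tsum_mul_weakPSum u e x
  rw [← ENNReal.ofReal_sum_of_nonneg fun _ _ => sq_nonneg _,
    ← ENNReal.ofReal_tsum_of_nonneg (fun _ => sq_nonneg _) hu, ← ENNReal.ofReal_mul hT,
    ENNReal.ofReal_le_ofReal_iff (mul_nonneg hT hx)] at h
  simpa only [Real.rpow_two, Real.sq_sqrt hT] using h

end HilbertSchmidt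

/-- Between Hilbert spaces, `2`-summing operators coincide with Hilbert-Schmidt operators, and
`π₂(u)` equals the Hilbert-Schmidt norm of `u`. -/
theorem two_summing_iff_hilbert_schmidt
    {H₁ H₂ : Type*} [NormedAddCommGroup H₁] [InnerProductSpace ℝ H₁] [CompleteSpace H₁]
    [NormedAddCommGroup H₂] [InnerProductSpace ℝ H₂] [CompleteSpace H₂]
    (u : H₁ →L[ℝ] H₂) :
    (IsPSumming 2 u ↔
      ∃ (s : Set H₁) (e : HilbertBasis s ℝ H₁), Summable fun i => ‖u (e i)‖ ^ 2) ∧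
    ∀ (s : Set H₁) (e : HilbertBasis s ℝ H₁), (Summable fun i => ‖u (e i)‖ ^ 2) →
      piNorm 2 u = Real.sqrt (∑' i, ‖u (e i)‖ ^ 2) := by
  refine ⟨⟨fun ⟨c, hc⟩ => ?_, fun ⟨s, e, hu⟩ => ⟨_, sqrt_tsum_norm_sq_mem_summingSet u e hu⟩⟩,
    fun s e hu => IsLeast.csInf_eq ⟨sqrt_tsum_norm_sq_mem_summingSet u e hu, fun c hc => ?_⟩⟩
  · obtain ⟨s, e, -⟩ := exists_hilbertBasis ℝ H₁
    exact ⟨s, e, summable_of_sum_le (fun _ => sq_nonneg _)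
      (e.orthonormal.sum_norm_sq_le_of_mem_summingSet hc)⟩
  · exact (Real.sqrt_le_left hc.1).mpr
      (hu.tsum_le_of_sum_le (e.orthonormal.sum_norm_sq_le_of_mem_summingSet hc))
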